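/- arXiv:1211.0039 — 5 statements merged into one kernel-verified Lean document; each statement's English description precedes it below -/
import Mathlib

section
/- Let I be the ideal generated by {x_j² − x_j : 1 ≤ j ≤ n} in R[x_1,…,x_n], and let A ⊆ B ⊆ {1,…,n}. Then the polynomial f = |B∖A| − x^A + x^B − ∑_{k ∈ B∖A} x_k is congruent modulo I to a sum of |B∖A| idempotent polynomials; consequently f is a sum of squares modulo I, and f is nonnegative on {0,1}^n. -/
/-!
Adding the variables of `B ∖ A` one at a time, `A = A₀ ⊂ A₁ ⊂ ⋯ ⊂ A_m = B`, the polynomial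
telescopes as `f = ∑ₖ (1 - x_k) (1 - x^{A_k})`. This is an identity in any commutative ring, and in
`R[x] ⧸ I`, where every `x_k` and hence every `x^{A_k}` is idempotent, each summand is idempotent.
Idempotents are their own squares, and evaluation at a point of `{0,1}^n` factors through
`R[x] ⧸ I`.
-/

open MvPolynomial

section Idempotent

variable {S : Type*} [CommRing S]

theorem isIdempotentElem_prod {ι : Type*} {s : Finset ι} {x : ι → S}
    (hx : ∀ i ∈ s, IsIdempotentElem (x i)) : IsIdempotentElem (∏ i ∈ s, x i) :=
  Finset.prod_induction x IsIdempotentElem (fun _ _ => IsIdempotentElem.mul)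
    IsIdempotentElem.one hx

theorem exists_isIdempotentElem_sum_eq {ι : Type*} [DecidableEq ι] {c : S}
    (hc : IsIdempotentElem c) {x : ι → S} (s : Finset ι) (hx : ∀ i ∈ s, IsIdempotentElem (x i)) :
    ∃ g : Fin s.card → S, (∀ j, IsIdempotentElem (g j)) ∧
      (s.card : S) - c + c * ∏ i ∈ s, x i - ∑ i ∈ s, x i = ∑ j, g j := by
  induction s using Finset.induction_on with
  | empty => exact ⟨fun _ => 0, Fin.rec0, by simp⟩
  | @insert a s has ih =>
    obtain ⟨g, hg, hsum⟩ := ih fun i hi => hx i (Finset.mem_insert_of_mem hi)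
    have hnew : IsIdempotentElem ((1 - x a) * (1 - c * ∏ i ∈ s, x i)) :=
      (hx a (Finset.mem_insert_self a s)).one_sub.mul
        (hc.mul (isIdempotentElem_prod fun i hi => hx i (Finset.mem_insert_of_mem hi))).one_sub
    rw [Finset.card_insert_of_notMem has]
    refine ⟨Fin.cons _ g, Fin.cases hnew hg, ?_⟩
    rw [Fin.sum_cons, ← hsum, Finset.prod_insert has, Finset.sum_insert has]
    push_cast
    ring

end Idempotent

namespace Ideal.Quotient

variable {S : Type*} [CommRing S] {I : Ideal S} {m : ℕ} {f : S}

theorem isIdempotentElem_mk_iff {a : S} : IsIdempotentElem (mk I a) ↔ a ^ 2 - a ∈ I := by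
  rw [IsIdempotentElem, ← map_mul, Ideal.Quotient.eq, sq]

theorem exists_sub_sum_mem_of_mk_eq_sum {e : Fin m → S ⧸ I} (he : ∀ j, IsIdempotentElem (e j))
    (hf : mk I f = ∑ j, e j) : ∃ g : Fin m → S, (∀ j, g j ^ 2 - g j ∈ I) ∧ f - ∑ j, g j ∈ I := by
  choose g hg using fun j => mk_surjective (e j)
  refine ⟨g, fun j => isIdempotentElem_mk_iff.mp (hg j ▸ he j), ?_⟩
  rw [← Ideal.Quotient.eq, hf, map_sum]
  simp only [hg]

end Ideal.Quotient

theorem Ideal.sub_sum_sq_mem_of_sub_sum_mem {S : Type*} [CommRing S] {I : Ideal S} {m : ℕ} {f : S}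
    {g : Fin m → S} (hg : ∀ j, g j ^ 2 - g j ∈ I) (hf : f - ∑ j, g j ∈ I) :
    f - ∑ j, g j ^ 2 ∈ I := by
  have h : f - ∑ j, g j ^ 2 = (f - ∑ j, g j) - ∑ j, (g j ^ 2 - g j) := by
    rw [Finset.sum_sub_distrib]; ring
  exact h ▸ I.sub_mem hf (I.sum_mem fun j _ => hg j)

theorem RingHom.nonneg_of_sub_sum_sq_mem_ker {S R : Type*} [CommRing S] [CommRing R]
    [LinearOrder R] [IsStrictOrderedRing R] (φ : S →+* R) {m : ℕ} {f : S} {g : Fin m → S}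
    (hf : f - ∑ j, g j ^ 2 ∈ RingHom.ker φ) : 0 ≤ φ f := by
  rw [RingHom.mem_ker, map_sub, sub_eq_zero] at hf
  rw [hf, map_sum]
  exact Finset.sum_nonneg fun j _ => by rw [map_pow]; positivity

namespace MvPolynomial

variable (σ R : Type*) [CommRing R]

noncomputable def booleanIdeal : Ideal (MvPolynomial σ R) :=
  Ideal.span {p | ∃ l, p = X l ^ 2 - X l}

variable {σ R}

theorem isIdempotentElem_mk_X (l : σ) :
    IsIdempotentElem (Ideal.Quotient.mk (booleanIdeal σ R) (X l)) :=
  Ideal.Quotient.isIdempotentElem_mk_iff.mpr (Ideal.subset_span ⟨l, rfl⟩)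

theorem booleanIdeal_le_ker_eval {x : σ → R} (hx : ∀ i, x i = 0 ∨ x i = 1) :
    booleanIdeal σ R ≤ RingHom.ker (eval x) := by
  rw [booleanIdeal, Ideal.span_le]
  rintro p ⟨l, rfl⟩
  rcases hx l with h | h <;> simp [RingHom.mem_ker, h]

end MvPolynomial

/-- Lemma 3.1 of the paper: with `A ⊆ B ⊆ {1,…,n}` and
`f = |B∖A| - x^A + x^B - ∑_{k∈B∖A} x_k`, the polynomial `f` is a sum of `|B∖A|`
idempotents mod `I = ⟨x_j² - x_j⟩`, hence a sum of squares mod `I`, and is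
nonnegative on `{0,1}^n`. -/
theorem sos_lemma (n : ℕ) (A B : Finset (Fin n)) (hAB : A ⊆ B) :
    let I : Ideal (MvPolynomial (Fin n) ℝ) :=
      Ideal.span {p : MvPolynomial (Fin n) ℝ | ∃ l : Fin n, p = X l ^ 2 - X l}
    let f : MvPolynomial (Fin n) ℝ :=
      (((B \ A).card : MvPolynomial (Fin n) ℝ)) - ∏ i ∈ A, X i + ∏ i ∈ B, X i -
        ∑ k ∈ B \ A, X k
    (∃ g : Fin (B \ A).card → MvPolynomial (Fin n) ℝ,
        (∀ j, (g j) ^ 2 - g j ∈ I) ∧ f - ∑ j, g j ∈ I) ∧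
      (∃ (m : ℕ) (g : Fin m → MvPolynomial (Fin n) ℝ), f - ∑ j, (g j) ^ 2 ∈ I) ∧
      (∀ x : Fin n → ℝ, (∀ i, x i = 0 ∨ x i = 1) → 0 ≤ eval x f) := by
  intro I f
  obtain ⟨g, hg, hfg⟩ : ∃ g : Fin (B \ A).card → MvPolynomial (Fin n) ℝ,
      (∀ j, g j ^ 2 - g j ∈ booleanIdeal (Fin n) ℝ) ∧ f - ∑ j, g j ∈ booleanIdeal (Fin n) ℝ := by
    obtain ⟨e, he, hsum⟩ := exists_isIdempotentElem_sum_eq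
      (isIdempotentElem_prod fun i (_ : i ∈ A) => isIdempotentElem_mk_X (R := ℝ) i)
      (B \ A) fun i _ => isIdempotentElem_mk_X i
    refine Ideal.Quotient.exists_sub_sum_mem_of_mk_eq_sum he ?_
    simp only [f, ← hsum, ← Finset.prod_sdiff hAB]
    simp [mul_comm]
  have hsq := Ideal.sub_sum_sq_mem_of_sub_sum_mem hg hfg
  exact ⟨⟨g, hg, hfg⟩, ⟨_, g, hsq⟩, fun x hx =>
    (eval x).nonneg_of_sub_sum_sq_mem_ker (booleanIdeal_le_ker_eval hx hsq)⟩
end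

section
/- Let V ⊆ {0,1}^n be lower-comprehensive (downward closed under the componentwise order) and contain all standard basis vectors. Then the vanishing ideal of V is generated by {x_j² − x_j : j = 1,…,n} together with the monomials x^S = ∏_{i∈S} x_i for all S whose characteristic vector is not in V, and the monomials {x^S : χ_S ∈ V} form a vector-space basis of R[x_1,…,x_n]/I(V). -/
/-!
Modulo the `x_i² - x_i`, every monomial reduces to a squarefree one `x^S`, and modulo the
generators `x^S` with `χ_S ∉ V` only the `x^S` with `χ_S ∈ V` survive, so these span the quotient
by the ideal `J` of generators. On the other hand they stay linearly independent modulo `I(V)`: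
evaluating `∑ c_T x^T` at `χ_S` gives `∑_{T ⊆ S} c_T`, a unitriangular system in the subset
order. Hence the surjection `ℝ[x]/J → ℝ[x]/I(V)` carries a spanning family to an independent one,
so it is injective and `J = I(V)`. Lower-comprehensiveness is what makes `J ≤ I(V)`.
-/

open MvPolynomial

lemma Ideal.le_of_span_range_mk_eq_top_of_linearIndependent_mk {R A ι : Type*} [CommRing R]
    [CommRing A] [Algebra R A] {I J : Ideal A} (hJI : J ≤ I) (v : ι → A)
    (hspan : Submodule.span R (Set.range (Ideal.Quotient.mk J ∘ v)) = ⊤)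
    (hli : LinearIndependent R (Ideal.Quotient.mk I ∘ v)) : I ≤ J := by
  have hinj := LinearMap.injective_of_linearIndependent
    (f := (Ideal.Quotient.factorₐ R hJI).toLinearMap) hspan hli
  intro p hp
  rw [← Ideal.Quotient.eq_zero_iff_mem]
  refine hinj ?_
  rw [map_zero]
  exact Ideal.Quotient.eq_zero_iff_mem.mpr hp

section Squarefree

variable {σ R : Type*} [CommRing R] {J : Ideal (MvPolynomial σ R)}

lemma isIdempotentElem_mk_X (hJ : ∀ i, X i ^ 2 - X i ∈ J) (i : σ) :
    IsIdempotentElem (Ideal.Quotient.mk J (X i)) := by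
  rw [IsIdempotentElem, ← map_mul, Ideal.Quotient.mk_eq_mk_iff_sub_mem, ← sq]
  exact hJ i

lemma mk_monomial_one_eq_mk_prod_X (hJ : ∀ i, X i ^ 2 - X i ∈ J) (m : σ →₀ ℕ) :
    Ideal.Quotient.mk J (monomial m 1) = Ideal.Quotient.mk J (∏ i ∈ m.support, X i) := by
  rw [monomial_eq, C_1, one_mul, Finsupp.prod, map_prod, map_prod]
  refine Finset.prod_congr rfl fun i hi => ?_
  rw [map_pow, (isIdempotentElem_mk_X hJ i).pow_eq (Finsupp.mem_support_iff.mp hi)]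

lemma span_range_mk_prod_X_eq_top (hJ : ∀ i, X i ^ 2 - X i ∈ J) :
    Submodule.span R (Set.range fun S : Finset σ => Ideal.Quotient.mk J (∏ i ∈ S, X i)) = ⊤ := by
  have hmk := LinearMap.range_eq_top (f := (Ideal.Quotient.mkₐ R J).toLinearMap) |>.mpr
    (Ideal.Quotient.mkₐ_surjective R J)
  rw [LinearMap.range_eq_map, ← (basisMonomials σ R).span_eq, Submodule.map_span,
    coe_basisMonomials, ← Set.range_comp] at hmk
  rw [eq_top_iff, ← hmk]
  refine Submodule.span_mono ?_
  rintro _ ⟨m, rfl⟩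
  exact ⟨m.support, (mk_monomial_one_eq_mk_prod_X hJ m).symm⟩

lemma span_range_mk_prod_X_subtype_eq_top (p : Finset σ → Prop) (hJ : ∀ i, X i ^ 2 - X i ∈ J)
    (hp : ∀ S, ¬ p S → ∏ i ∈ S, X i ∈ J) :
    Submodule.span R (Set.range fun S : {S // p S} => Ideal.Quotient.mk J (∏ i ∈ S.1, X i)) =
      ⊤ := by
  rw [eq_top_iff, ← span_range_mk_prod_X_eq_top hJ, Submodule.span_le]
  rintro _ ⟨S, rfl⟩
  by_cases hS : p S
  · exact Submodule.subset_span ⟨⟨S, hS⟩, rfl⟩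
  · change Ideal.Quotient.mk J (∏ i ∈ S, X i) ∈ _
    rw [Ideal.Quotient.eq_zero_iff_mem.mpr (hp S hS)]
    exact Submodule.zero_mem _

end Squarefree

variable {σ K : Type*}

lemma X_sq_sub_X_mem_vanishingIdeal [Field K] {V : Set (σ → K)}
    (h01 : ∀ v ∈ V, ∀ i, v i = 0 ∨ v i = 1) (i : σ) :
    X i ^ 2 - X i ∈ vanishingIdeal K V := by
  rw [mem_vanishingIdeal_iff]
  intro v hv
  rcases h01 v hv i with h | h <;> simp [h]

variable [DecidableEq σ]

def charVec (K : Type*) [Zero K] [One K] (S : Finset σ) : σ → K :=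
  fun i => if i ∈ S then 1 else 0

lemma eval_charVec_prod_X [CommSemiring K] (S T : Finset σ) :
    eval (charVec K S) (∏ i ∈ T, X i) = if T ⊆ S then 1 else 0 := by
  simp only [map_prod, eval_X, charVec]
  split_ifs with hTS
  · exact Finset.prod_eq_one fun i hi => if_pos (hTS hi)
  · obtain ⟨i, hiT, hiS⟩ := Finset.not_subset.mp hTS
    exact Finset.prod_eq_zero hiT (if_neg hiS)

lemma linearIndependent_mk_prod_X [Field K] (V : Set (σ → K)) :
    LinearIndependent K fun S : {S : Finset σ // charVec K S ∈ V} =>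
      Ideal.Quotient.mk (vanishingIdeal K V) (∏ i ∈ S.1, X i) := by
  rw [linearIndependent_iff']
  intro s g hg
  have hvan : ∑ T ∈ s, g T • ∏ i ∈ T.1, X i ∈ vanishingIdeal K V := by
    rw [← Ideal.Quotient.eq_zero_iff_mem, ← hg, ← Ideal.Quotient.mkₐ_eq_mk K]
    simp only [map_sum, map_smul]
  have htri (S : {S : Finset σ // charVec K S ∈ V}) :
      ∑ T ∈ s, (if T.1 ⊆ S.1 then g T else 0) = 0 := by
    have := mem_vanishingIdeal_iff.mp hvan _ S.2
    simpa only [aeval_eq_eval, map_sum, smul_eval, eval_charVec_prod_X, mul_ite, mul_one,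
      mul_zero] using this
  intro S hS
  induction hc : S.1.card using Nat.strong_induction_on generalizing S with
  | _ m ih =>
    have hS' := htri S
    rwa [Finset.sum_eq_single S (fun T hT hTS => ?_) (fun h => (h hS).elim),
      if_pos subset_rfl] at hS'
    split_ifs with hsub
    · exact ih _ (hc ▸ Finset.card_lt_card (Finset.ssubset_iff_subset_ne.mpr
        ⟨hsub, fun h => hTS (Subtype.ext h)⟩)) T hT rfl
    · rfl

section VanishingIdeal

variable [Field K] {V : Set (σ → K)}

lemma prod_X_mem_vanishingIdeal (h01 : ∀ v ∈ V, ∀ i, v i = 0 ∨ v i = 1)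
    (hdown : ∀ v ∈ V, ∀ S : Finset σ, (∀ i ∈ S, v i = 1) → charVec K S ∈ V) {S : Finset σ}
    (hS : charVec K S ∉ V) : ∏ i ∈ S, X i ∈ vanishingIdeal K V := by
  rw [mem_vanishingIdeal_iff]
  intro v hv
  obtain ⟨i, hiS, hi⟩ : ∃ i ∈ S, v i ≠ 1 := by
    by_contra! h
    exact hS (hdown v hv S h)
  rw [aeval_eq_eval, map_prod]
  exact Finset.prod_eq_zero hiS (by rw [eval_X]; exact (h01 v hv i).resolve_right hi)

theorem vanishingIdeal_eq_span_X_sq_sub_X_union_prod_X (h01 : ∀ v ∈ V, ∀ i, v i = 0 ∨ v i = 1)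
    (hdown : ∀ v ∈ V, ∀ S : Finset σ, (∀ i ∈ S, v i = 1) → charVec K S ∈ V) :
    vanishingIdeal K V =
      Ideal.span ({p | ∃ j, p = X j ^ 2 - X j} ∪
        {p | ∃ S : Finset σ, charVec K S ∉ V ∧ p = ∏ i ∈ S, X i}) := by
  set J := Ideal.span ({p : MvPolynomial σ K | ∃ j, p = X j ^ 2 - X j} ∪
    {p | ∃ S : Finset σ, charVec K S ∉ V ∧ p = ∏ i ∈ S, X i})
  have hJ : J ≤ vanishingIdeal K V := by
    rw [Ideal.span_le]
    rintro p (⟨j, rfl⟩ | ⟨S, hS, rfl⟩)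
    exacts [X_sq_sub_X_mem_vanishingIdeal h01 j, prod_X_mem_vanishingIdeal h01 hdown hS]
  have hspan := span_range_mk_prod_X_subtype_eq_top (J := J) (fun S => charVec K S ∈ V)
    (fun j => Ideal.subset_span (Or.inl ⟨j, rfl⟩))
    (fun S hS => Ideal.subset_span (Or.inr ⟨S, hS, rfl⟩))
  exact le_antisymm
    (Ideal.le_of_span_range_mk_eq_top_of_linearIndependent_mk hJ _ hspan
      (linearIndependent_mk_prod_X V)) hJ

end VanishingIdeal

theorem vanishingIdeal_lowerComprehensive_general (n : ℕ) (V : Set (Fin n → ℝ))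
    (h01 : ∀ v ∈ V, ∀ i, v i = 0 ∨ v i = 1)
    (hlc : ∀ v ∈ V, ∀ w : Fin n → ℝ, (∀ i, w i = 0 ∨ w i = 1) →
      (∀ i, w i ≤ v i) → w ∈ V) :
    MvPolynomial.vanishingIdeal ℝ V =
        Ideal.span ({p : MvPolynomial (Fin n) ℝ | ∃ j : Fin n, p = X j ^ 2 - X j} ∪
          {p : MvPolynomial (Fin n) ℝ | ∃ S : Finset (Fin n),
            (fun i => if i ∈ S then (1 : ℝ) else 0) ∉ V ∧ p = ∏ i ∈ S, X i}) ∧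
      ∃ b : Module.Basis {S : Finset (Fin n) // (fun i => if i ∈ S then (1 : ℝ) else 0) ∈ V} ℝ
          (MvPolynomial (Fin n) ℝ ⧸ MvPolynomial.vanishingIdeal ℝ V),
        ∀ S, b S = Ideal.Quotient.mk (MvPolynomial.vanishingIdeal ℝ V) (∏ i ∈ S.1, X i) := by
  have hdown : ∀ v ∈ V, ∀ S : Finset (Fin n), (∀ i ∈ S, v i = 1) → charVec ℝ S ∈ V := by
    intro v hv S hS
    refine hlc v hv _ (fun i => ?_) (fun i => ?_) <;> by_cases hi : i ∈ S
    · simp [charVec, hi]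
    · simp [charVec, hi]
    · simp [charVec, hi, hS i hi]
    · rcases h01 v hv i with h | h <;> simp [charVec, hi, h]
  have hspan := span_range_mk_prod_X_subtype_eq_top (fun S => charVec ℝ S ∈ V)
    (X_sq_sub_X_mem_vanishingIdeal h01) (fun _ hS => prod_X_mem_vanishingIdeal h01 hdown hS)
  exact ⟨vanishingIdeal_eq_span_X_sq_sub_X_union_prod_X h01 hdown,
    Module.Basis.mk (linearIndependent_mk_prod_X V) hspan.ge, fun _ => Module.Basis.mk_apply _ _ _⟩

/-- Lemma 2.1 of the paper: for a lower-comprehensive `V ⊆ {0,1}^n` containing the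
standard basis vectors, the vanishing ideal of `V` is generated by the `x_j² - x_j`
together with the monomials `x^S` for `χ_S ∉ V`, and the monomials `x^S` with
`χ_S ∈ V` form a vector-space basis of the quotient ring. -/
theorem vanishingIdeal_lowerComprehensive (n : ℕ) (V : Set (Fin n → ℝ))
    (h01 : ∀ v ∈ V, ∀ i, v i = 0 ∨ v i = 1)
    (hlc : ∀ v ∈ V, ∀ w : Fin n → ℝ, (∀ i, w i = 0 ∨ w i = 1) →
      (∀ i, w i ≤ v i) → w ∈ V)
    (hbasis : ∀ j : Fin n, (fun i => if i = j then (1 : ℝ) else 0) ∈ V) :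
    MvPolynomial.vanishingIdeal ℝ V =
        Ideal.span ({p : MvPolynomial (Fin n) ℝ | ∃ j : Fin n, p = X j ^ 2 - X j} ∪
          {p : MvPolynomial (Fin n) ℝ | ∃ S : Finset (Fin n),
            (fun i => if i ∈ S then (1 : ℝ) else 0) ∉ V ∧ p = ∏ i ∈ S, X i}) ∧
      ∃ b : Module.Basis {S : Finset (Fin n) // (fun i => if i ∈ S then (1 : ℝ) else 0) ∈ V} ℝ
          (MvPolynomial (Fin n) ℝ ⧸ MvPolynomial.vanishingIdeal ℝ V),
        ∀ S, b S = Ideal.Quotient.mk (MvPolynomial.vanishingIdeal ℝ V) (∏ i ∈ S.1, X i) :=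
  vanishingIdeal_lowerComprehensive_general n V h01 hlc
end

section
/- Let V ⊆ {0,1}^n be lower-comprehensive with vanishing ideal I, and suppose every x ∈ {0,1}^n ∖ V satisfies ∑_j x_j ≥ k. If a polynomial F ∈ I has degree less than k, then F lies in the ideal generated by {x_j² − x_j : j = 1,…,n} alone. -/
/-!
Points of `{0,1}^n` with fewer than `k` ones lie in `V`, so `F` vanishes there. For a polynomial
of total degree `< #s`, the alternating sum over `t ⊆ s` of its values at the indicator vectors
`1_t` vanishes, because every monomial misses some `i ∈ s` and adding `i` to `t` flips the sign
without changing the value. Induction on `#s` then shows that `F` vanishes on all of `{0,1}^n`,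
and the Combinatorial Nullstellensatz puts it in the ideal generated by the `X j * (X j - 1)`.
-/

open MvPolynomial Finset

section

variable {σ R : Type*} [CommRing R]

theorem sum_powerset_neg_one_pow_card_mul_eq_zero {α : Type*} [DecidableEq α] {s : Finset α}
    {i : α} (hi : i ∈ s) (g : Finset α → R) (hg : ∀ t ⊆ s.erase i, g (insert i t) = g t) :
    ∑ t ∈ s.powerset, (-1) ^ #t * g t = 0 := by
  rw [← insert_erase hi, sum_powerset_insert (notMem_erase i s), ← sum_add_distrib]
  refine sum_eq_zero fun t ht => ?_
  have hts : t ⊆ s.erase i := mem_powerset.1 ht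
  rw [card_insert_of_notMem fun hit => notMem_erase i s (hts hit), hg t hts, pow_succ]
  ring

theorem Finsupp.card_support_le_sum (d : σ →₀ ℕ) : #d.support ≤ d.sum fun _ e => e := by
  classical
  calc #d.support = #(Finsupp.toMultiset d).toFinset := by rw [Finsupp.toFinset_toMultiset]
    _ ≤ Multiset.card (Finsupp.toMultiset d) := Multiset.toFinset_card_le _
    _ = d.sum fun _ e => e := Finsupp.card_toMultiset d

theorem eval_monomial_congr {x y : σ → R} {d : σ →₀ ℕ} (hxy : ∀ i ∈ d.support, x i = y i)
    (c : R) : eval x (monomial d c) = eval y (monomial d c) := by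
  simp only [eval_monomial]
  congr 1
  exact prod_congr rfl fun i hi => by simp only [hxy i hi]

theorem sum_powerset_neg_one_pow_card_mul_eval_indicator_eq_zero (f : MvPolynomial σ R)
    {s : Finset σ} (hf : f.totalDegree < #s) :
    ∑ t ∈ s.powerset, (-1) ^ #t * eval ((t : Set σ).indicator 1) f = 0 := by
  classical
  have heval (x : σ → R) : eval x f = ∑ d ∈ f.support, eval x (monomial d (coeff d f)) := by
    conv_lhs => rw [f.as_sum]
    exact map_sum _ _ _
  simp_rw [heval, mul_sum]
  rw [sum_comm]
  refine sum_eq_zero fun d hd => ?_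
  obtain ⟨i, his, hid⟩ := exists_mem_notMem_of_card_lt_card
    ((d.card_support_le_sum.trans (le_totalDegree hd)).trans_lt hf)
  refine sum_powerset_neg_one_pow_card_mul_eq_zero his _ fun t _ => eval_monomial_congr
    (fun j hj => ?_) _
  have hji : j ≠ i := ne_of_mem_of_not_mem hj hid
  simp [Set.indicator_apply, hji]

theorem eval_indicator_eq_zero_of_totalDegree_lt (f : MvPolynomial σ R) {k : ℕ}
    (hf : f.totalDegree < k)
    (hsmall : ∀ t : Finset σ, #t < k → eval ((t : Set σ).indicator 1) f = 0) (s : Finset σ) :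
    eval ((s : Set σ).indicator 1) f = 0 := by
  induction s using Finset.strongInduction with
  | H s ih =>
    by_cases hs : #s < k
    · exact hsmall s hs
    have hsum :=
      sum_powerset_neg_one_pow_card_mul_eval_indicator_eq_zero f (hf.trans_le (not_lt.1 hs))
    rw [sum_eq_single_of_mem s (mem_powerset_self s) fun t ht hts => by
      rw [ih t (ssubset_of_subset_of_ne (mem_powerset.1 ht) hts), mul_zero]] at hsum
    exact ((isUnit_neg_one (α := R)).pow _).mul_right_eq_zero.1 hsum

theorem indicator_filter_eq_one_of_zero_or_one [Fintype σ] [DecidableEq R] {x : σ → R}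
    (hx : ∀ i, x i = 0 ∨ x i = 1) : (↑(univ.filter fun i => x i = 1) : Set σ).indicator 1 = x := by
  ext i
  by_cases hi : x i = 1
  · simp [hi]
  · rw [Set.indicator_of_notMem (by simpa using hi)]
    exact ((hx i).resolve_right hi).symm

theorem mem_span_X_sq_sub_X_of_eval_indicator_eq_zero [IsDomain R] [Fintype σ]
    (f : MvPolynomial σ R) (hf : ∀ s : Finset σ, eval ((s : Set σ).indicator 1) f = 0) :
    f ∈ Ideal.span {p | ∃ j, p = X j ^ 2 - X j} := by
  classical
  obtain ⟨h, -, rfl⟩ := combinatorial_nullstellensatz_exists_linearCombination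
    (fun _ => {0, 1}) (fun _ => insert_nonempty _ _) f fun x hx => by
      rw [← indicator_filter_eq_one_of_zero_or_one (x := x) (fun i => by simpa using hx i)]
      exact hf _
  refine Submodule.span_mono ?_ (Finsupp.mem_span_range_iff_exists_finsupp.2 ⟨h, rfl⟩)
  rintro _ ⟨j, rfl⟩
  exact ⟨j, by simp only [prod_pair zero_ne_one, C_0, C_1, sub_zero]; ring⟩

end

theorem low_degree_in_boolean_ideal_general (n k : ℕ) (V : Set (Fin n → ℝ))
    (hk : ∀ x : Fin n → ℝ, (∀ i, x i = 0 ∨ x i = 1) → x ∉ V →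
      k ≤ (Finset.univ.filter (fun j => x j = 1)).card)
    (F : MvPolynomial (Fin n) ℝ) (hF : F ∈ MvPolynomial.vanishingIdeal ℝ V)
    (hdeg : F.totalDegree < k) :
    F ∈ Ideal.span {p : MvPolynomial (Fin n) ℝ | ∃ j : Fin n, p = X j ^ 2 - X j} := by
  classical
  refine mem_span_X_sq_sub_X_of_eval_indicator_eq_zero F
    (eval_indicator_eq_zero_of_totalDegree_lt F hdeg fun t ht => hF _ ?_)
  by_contra hV
  refine (hk _ (fun i => by by_cases hi : i ∈ t <;> simp [hi]) hV).not_gt ?_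
  simpa [Set.indicator_apply] using ht

/-- Key step of Lemma 2.2: if every 0/1 point outside the lower-comprehensive set `V`
has at least `k` ones, then every polynomial of degree `< k` vanishing on `V` lies
in the ideal generated by the `x_j² - x_j` alone. -/
theorem low_degree_in_boolean_ideal (n k : ℕ) (V : Set (Fin n → ℝ))
    (h01 : ∀ v ∈ V, ∀ i, v i = 0 ∨ v i = 1)
    (hlc : ∀ v ∈ V, ∀ w : Fin n → ℝ, (∀ i, w i = 0 ∨ w i = 1) →
      (∀ i, w i ≤ v i) → w ∈ V)
    (hk : ∀ x : Fin n → ℝ, (∀ i, x i = 0 ∨ x i = 1) → x ∉ V →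
      k ≤ (Finset.univ.filter (fun j => x j = 1)).card)
    (F : MvPolynomial (Fin n) ℝ) (hF : F ∈ MvPolynomial.vanishingIdeal ℝ V)
    (hdeg : F.totalDegree < k) :
    F ∈ Ideal.span {p : MvPolynomial (Fin n) ℝ | ∃ j : Fin n, p = X j ^ 2 - X j} :=
  low_degree_in_boolean_ideal_general n k V hk F hF hdeg
end

section
/- Let I be the ideal generated by {x_j² − x_j : 1 ≤ j ≤ n} together with all monomials x_{a}x_{b}x_{c} for triangles {a,b,c} of a graph, specialized to the triangle ideal on three variables: I = ⟨x_A² − x_A, x_B² − x_B, x_C² − x_C, x_A x_B x_C⟩. Then the polynomial 2 − x_A − x_B − x_C is a sum of squares modulo I of polynomials of degree at most 2. -/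
/-!
On the points of `{0,1}³` other than `(1,1,1)`, the quadratics `e = (1 - a)(1 - b) - c(1 - a - b)`
and `s_a = a(1 - b - c)` are the indicator functions of the empty edge set and of the edge set
`{a}`. Since `2 - a - b - c` takes the values `2, 1, 0` on edge sets of size `0, 1, 2`, it agrees
there with `2 e² + s_a² + s_b² + s_c²`. Algebraically, this identity holds in every commutative
ring in which `a, b, c` are idempotent and `abc = 0`, in particular modulo the triangle ideal.
-/

open MvPolynomial

section Indicators

variable {R : Type*} [CommRing R]

def emptyIndicator (a b c : R) : R := (1 - a) * (1 - b) - c * (1 - a - b)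

def singletonIndicator (a b c : R) : R := a * (1 - b - c)

theorem map_emptyIndicator {S : Type*} [CommRing S] (f : R →+* S) (a b c : R) :
    f (emptyIndicator a b c) = emptyIndicator (f a) (f b) (f c) := by
  simp [emptyIndicator]

theorem map_singletonIndicator {S : Type*} [CommRing S] (f : R →+* S) (a b c : R) :
    f (singletonIndicator a b c) = singletonIndicator (f a) (f b) (f c) := by
  simp [singletonIndicator]

theorem two_sub_eq_sum_sq_indicators {a b c : R} (ha : IsIdempotentElem a)
    (hb : IsIdempotentElem b) (hc : IsIdempotentElem c) (habc : a * b * c = 0) :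
    2 - a - b - c = 2 * emptyIndicator a b c ^ 2 + singletonIndicator a b c ^ 2
      + singletonIndicator b c a ^ 2 + singletonIndicator c a b ^ 2 := by
  unfold emptyIndicator singletonIndicator IsIdempotentElem at *
  linear_combination (-4 * b ^ 2 - 6 * b * c + 6 * b - 4 * c ^ 2 + 6 * c - 3) * ha
    + (-6 * a * c + 2 * a - 4 * c ^ 2 + 6 * c - 3) * hb
    + (-6 * a * b + 2 * a + 2 * b - 3) * hc - 6 * habc

theorem isIdempotentElem_mk_of_sq_sub_mem {I : Ideal R} {a : R} (h : a ^ 2 - a ∈ I) :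
    IsIdempotentElem (Ideal.Quotient.mk I a) := by
  rwa [IsIdempotentElem, ← map_mul, Ideal.Quotient.eq, ← sq]

end Indicators

section TotalDegree

variable {σ R : Type*} [CommRing R] {p q : MvPolynomial σ R} {m n : ℕ}

theorem totalDegree_sub_le_of_le (hp : p.totalDegree ≤ n) (hq : q.totalDegree ≤ n) :
    (p - q).totalDegree ≤ n :=
  (totalDegree_sub p q).trans (max_le hp hq)

theorem totalDegree_mul_le_of_le (hp : p.totalDegree ≤ m) (hq : q.totalDegree ≤ n) :
    (p * q).totalDegree ≤ m + n :=
  (totalDegree_mul p q).trans (add_le_add hp hq)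

variable [Nontrivial R]

theorem totalDegree_one_sub_X_le (i : σ) : (1 - X i : MvPolynomial σ R).totalDegree ≤ 1 :=
  totalDegree_sub_le_of_le (by simp) (totalDegree_X i).le

theorem totalDegree_one_sub_X_sub_X_le (i j : σ) :
    (1 - X i - X j : MvPolynomial σ R).totalDegree ≤ 1 :=
  totalDegree_sub_le_of_le (totalDegree_one_sub_X_le i) (totalDegree_X j).le

theorem totalDegree_emptyIndicator_X_le (i j k : σ) :
    (emptyIndicator (X i) (X j) (X k) : MvPolynomial σ R).totalDegree ≤ 2 :=
  totalDegree_sub_le_of_le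
    (totalDegree_mul_le_of_le (totalDegree_one_sub_X_le i) (totalDegree_one_sub_X_le j))
    (totalDegree_mul_le_of_le (totalDegree_X k).le (totalDegree_one_sub_X_sub_X_le i j))

theorem totalDegree_singletonIndicator_X_le (i j k : σ) :
    (singletonIndicator (X i) (X j) (X k) : MvPolynomial σ R).totalDegree ≤ 2 :=
  totalDegree_mul_le_of_le (totalDegree_X i).le (totalDegree_one_sub_X_sub_X_le j k)

end TotalDegree

/-- For the triangle ideal `I = ⟨x_A² - x_A, x_B² - x_B, x_C² - x_C, x_A x_B x_C⟩`,
the polynomial `2 - x_A - x_B - x_C` is 2-sos mod `I`. -/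
theorem triangle_two_sos :
    ∃ (m : ℕ) (g : Fin m → MvPolynomial (Fin 3) ℝ),
      (∀ j, (g j).totalDegree ≤ 2) ∧
      ((2 : MvPolynomial (Fin 3) ℝ) - X 0 - X 1 - X 2) - ∑ j, (g j) ^ 2 ∈
        Ideal.span ({X 0 ^ 2 - X 0, X 1 ^ 2 - X 1, X 2 ^ 2 - X 2,
          X 0 * X 1 * X 2} : Set (MvPolynomial (Fin 3) ℝ)) := by
  set I := Ideal.span ({X 0 ^ 2 - X 0, X 1 ^ 2 - X 1, X 2 ^ 2 - X 2,
    X 0 * X 1 * X 2} : Set (MvPolynomial (Fin 3) ℝ))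
  refine ⟨5, ![emptyIndicator (X 0) (X 1) (X 2), emptyIndicator (X 0) (X 1) (X 2),
    singletonIndicator (X 0) (X 1) (X 2), singletonIndicator (X 1) (X 2) (X 0),
    singletonIndicator (X 2) (X 0) (X 1)], ?_, ?_⟩
  · intro j
    fin_cases j
    all_goals first
      | exact totalDegree_emptyIndicator_X_le _ _ _
      | exact totalDegree_singletonIndicator_X_le _ _ _
  · have hX : ∀ i : Fin 3, IsIdempotentElem (Ideal.Quotient.mk I (X i)) := fun i =>
      isIdempotentElem_mk_of_sq_sub_mem (Ideal.subset_span (by fin_cases i <;> simp))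
    have hXXX :
        Ideal.Quotient.mk I (X 0) * Ideal.Quotient.mk I (X 1) * Ideal.Quotient.mk I (X 2) = 0 := by
      rw [← map_mul, ← map_mul, Ideal.Quotient.eq_zero_iff_mem]
      exact Ideal.subset_span (by simp)
    rw [← Ideal.Quotient.eq_zero_iff_mem, map_sub, sub_eq_zero]
    simp only [Fin.sum_univ_five, map_sub, map_add, map_pow, map_ofNat, Matrix.cons_val,
      map_emptyIndicator, map_singletonIndicator]
    rw [two_sub_eq_sum_sq_indicators (hX 0) (hX 1) (hX 2) hXXX]
    ring
end

section
/- For variables x_1,…,x_{2k+1} with indices mod 2k+1, the identity k − ∑_{l=1}^{2k+1} x_l + ∑_{l=1}^{2k+1} x_l x_{l+1} = ∑_{l=1}^{k}(1 − x_{2l−1} − x_{2l} − x_{2l+1} + x_{2l−1}x_{2l} + x_{2l−1}x_{2l+1} + x_{2l}x_{2l+1}) + ∑_{l=2}^{k}(x_{2l−1} − x_{2l−1}x_1 − x_{2l−1}x_{2l+1} + x_{2l+1}x_1) holds as polynomials, and each summand in the two sums is idempotent modulo the ideal generated by {x_j² − x_j : 1 ≤ j ≤ 2k+1}. -/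
open MvPolynomial

/-!
Each summand is a sum of two products of literals (`x` or `1 - x`) that never equal `1` at the
same 0/1 point:
`g₁ l = (1 - x_{2l-1})(1 - x_{2l})(1 - x_{2l+1}) + x_{2l-1} x_{2l} x_{2l+1}` and
`g₂ l = x_{2l-1}(1 - x_{2l+1})(1 - x_1) + (1 - x_{2l-1}) x_{2l+1} x_1`.
These factorisations hold for arbitrary idempotents of a commutative ring, so the summands are
idempotent in the quotient by `⟨x_j² - x_j⟩`. The identity is proved by induction on `k`: passing
to `k + 1` adds two vertices to the cycle, and `g₁ (k + 1) + g₂ (k + 1)` is exactly the resulting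
change, including the replacement of the closing edge `x_{2k+1} x_1`.
-/

/-- Variable `x_l` of the odd cycle, indices taken mod `2k+1`. -/
noncomputable def cycVar (k l : ℕ) : MvPolynomial (ZMod (2 * k + 1)) ℝ :=
  MvPolynomial.X (l : ZMod (2 * k + 1))

namespace IsIdempotentElem

variable {R : Type*} [CommRing R] {a b c : R}

lemma add_of_mul_eq_zero (ha : IsIdempotentElem a) (hb : IsIdempotentElem b) (hab : a * b = 0) :
    IsIdempotentElem (a + b) :=
  ha.add hb (by rw [mul_comm b, hab, add_zero])

lemma one_sub_sub_sub_add_add_add (ha : IsIdempotentElem a) (hb : IsIdempotentElem b)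
    (hc : IsIdempotentElem c) :
    IsIdempotentElem (1 - a - b - c + a * b + a * c + b * c) := by
  rw [show 1 - a - b - c + a * b + a * c + b * c = (1 - a) * (1 - b) * (1 - c) + a * b * c by ring]
  refine (ha.one_sub.mul hb.one_sub |>.mul hc.one_sub).add_of_mul_eq_zero (ha.mul hb |>.mul hc) ?_
  linear_combination (b * c * (1 - b) * (1 - c)) * ha.one_sub_mul_self

lemma sub_sub_add_mul (ha : IsIdempotentElem a) (hb : IsIdempotentElem b)
    (hc : IsIdempotentElem c) :
    IsIdempotentElem (a - a * c - a * b + b * c) := by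
  rw [show a - a * c - a * b + b * c = a * (1 - b) * (1 - c) + (1 - a) * b * c by ring]
  refine (ha.mul hb.one_sub |>.mul hc.one_sub).add_of_mul_eq_zero (ha.one_sub.mul hb |>.mul hc) ?_
  linear_combination ((1 - b) * (1 - c) * b * c) * ha.one_sub_mul_self

end IsIdempotentElem

theorem Ideal.sq_sub_self_mem_iff_isIdempotentElem_mk {R : Type*} [CommRing R] (I : Ideal R)
    (a : R) : a ^ 2 - a ∈ I ↔ IsIdempotentElem (Ideal.Quotient.mk I a) := by
  rw [IsIdempotentElem, ← map_mul, Ideal.Quotient.eq, sq]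

theorem cycVar_add_cycle_length (k l : ℕ) : cycVar k (2 * k + 1 + l) = cycVar k l := by
  simp [cycVar]

theorem odd_cycle_sum_decomposition {R : Type*} [CommRing R] (f : ℕ → R) {k : ℕ} (hk : 1 ≤ k) :
    (k : R) - ∑ l ∈ Finset.Icc 1 (2 * k + 1), f l
      + ∑ l ∈ Finset.Icc 1 (2 * k), f l * f (l + 1) + f (2 * k + 1) * f 1
    = ∑ l ∈ Finset.Icc 1 k,
        (1 - f (2 * l - 1) - f (2 * l) - f (2 * l + 1)
          + f (2 * l - 1) * f (2 * l) + f (2 * l - 1) * f (2 * l + 1)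
          + f (2 * l) * f (2 * l + 1))
      + ∑ l ∈ Finset.Icc 2 k,
        (f (2 * l - 1) - f (2 * l - 1) * f 1 - f (2 * l - 1) * f (2 * l + 1)
          + f (2 * l + 1) * f 1) := by
  induction k, hk using Nat.le_induction with
  | base =>
    simp only [Nat.cast_one, mul_one, Nat.reduceAdd, Nat.one_le_ofNat, Finset.sum_Icc_succ_top,
      Finset.Icc_self, Finset.sum_singleton, Nat.add_one_sub_one, Order.lt_two_iff, le_refl,
      Finset.Icc_eq_empty_of_lt, Finset.sum_empty, add_zero]
    ring
  | succ k hk ih =>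
    rw [Finset.sum_Icc_succ_top (b := k) (by omega), Finset.sum_Icc_succ_top (b := k) (by omega),
      show 2 * (k + 1) = 2 * k + 1 + 1 by ring, Nat.add_sub_cancel,
      Finset.sum_Icc_succ_top (b := 2 * k + 1 + 1) (f := f) (by omega),
      Finset.sum_Icc_succ_top (b := 2 * k + 1) (f := f) (by omega),
      Finset.sum_Icc_succ_top (b := 2 * k + 1) (f := fun l => f l * f (l + 1)) (by omega),
      Finset.sum_Icc_succ_top (b := 2 * k) (f := fun l => f l * f (l + 1)) (by omega)]
    push_cast
    linear_combination ih

/-- The final computation in Lemma 3.3: the polynomial identity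
`k - ∑ x_l + ∑ x_l x_{l+1} = ∑_{l=1}^{k} (…) + ∑_{l=2}^{k} (…)`, where each
summand is idempotent mod `⟨x_j² - x_j⟩`. -/
theorem odd_cycle_identity (k : ℕ) (hk : 1 ≤ k) :
    let g₁ : ℕ → MvPolynomial (ZMod (2 * k + 1)) ℝ := fun l =>
      1 - cycVar k (2 * l - 1) - cycVar k (2 * l) - cycVar k (2 * l + 1) +
        cycVar k (2 * l - 1) * cycVar k (2 * l) +
        cycVar k (2 * l - 1) * cycVar k (2 * l + 1) +
        cycVar k (2 * l) * cycVar k (2 * l + 1)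
    let g₂ : ℕ → MvPolynomial (ZMod (2 * k + 1)) ℝ := fun l =>
      cycVar k (2 * l - 1) - cycVar k (2 * l - 1) * cycVar k 1 -
        cycVar k (2 * l - 1) * cycVar k (2 * l + 1) +
        cycVar k (2 * l + 1) * cycVar k 1
    let I : Ideal (MvPolynomial (ZMod (2 * k + 1)) ℝ) :=
      Ideal.span {p | ∃ j : ZMod (2 * k + 1), p = X j ^ 2 - X j}
    ((k : MvPolynomial (ZMod (2 * k + 1)) ℝ) -
        ∑ l ∈ Finset.Icc 1 (2 * k + 1), cycVar k l +
        ∑ l ∈ Finset.Icc 1 (2 * k + 1), cycVar k l * cycVar k (l + 1) =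
      ∑ l ∈ Finset.Icc 1 k, g₁ l + ∑ l ∈ Finset.Icc 2 k, g₂ l) ∧
      (∀ l ∈ Finset.Icc 1 k, (g₁ l) ^ 2 - g₁ l ∈ I) ∧
      (∀ l ∈ Finset.Icc 2 k, (g₂ l) ^ 2 - g₂ l ∈ I) := by
  intro g₁ g₂ I
  have hX : ∀ m : ℕ, IsIdempotentElem (Ideal.Quotient.mk I (cycVar k m)) := fun m =>
    (I.sq_sub_self_mem_iff_isIdempotentElem_mk _).mp (Ideal.subset_span ⟨m, rfl⟩)
  refine ⟨?_, fun l _ => ?_, fun l _ => ?_⟩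
  · rw [Finset.sum_Icc_succ_top (f := fun l => cycVar k l * cycVar k (l + 1)) (by omega),
      cycVar_add_cycle_length, ← add_assoc]
    exact odd_cycle_sum_decomposition (cycVar k) hk
  · rw [I.sq_sub_self_mem_iff_isIdempotentElem_mk]
    simpa only [g₁, map_add, map_sub, map_mul, map_one] using
      (hX _).one_sub_sub_sub_add_add_add (hX _) (hX _)
  · rw [I.sq_sub_self_mem_iff_isIdempotentElem_mk]
    simpa only [g₂, map_add, map_sub, map_mul] using (hX _).sub_sub_add_mul (hX _) (hX _)
end
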